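/- arXiv:1408.5007 — 2 statements merged into one kernel-verified Lean document; each statement's English description precedes it below -/
import Mathlib

section
/- For every integer n ≥ 3, Σ_{k=2}^{n−1} p_L(n,k)·H_k = (3n(n+1) − 6nH_n)/((n−1)(n−2)). -/
open Finset

/-- `n`-th harmonic number. -/
noncomputable def H (n : ℕ) : ℝ := ∑ k ∈ Finset.Icc 1 n, (1 : ℝ) / k

/-- Second-order harmonic number. -/
noncomputable def Hbar (n : ℕ) : ℝ := ∑ k ∈ Finset.Icc 1 n, (1 : ℝ) / (k : ℝ) ^ 2

noncomputable def pK (n k : ℕ) : ℝ :=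
  ((n : ℝ) + 1) / ((n : ℝ) - 1) * (2 / (((k : ℝ) + 1) * ((k : ℝ) + 2)))

noncomputable def pL (n k : ℕ) : ℝ :=
  ((n : ℝ) + 1) * ((n : ℝ) + 2) / (((n : ℝ) - 1) * ((n : ℝ) - 2)) *
    (6 * ((k : ℝ) - 1) / (((k : ℝ) + 1) * ((k : ℝ) + 2) * ((k : ℝ) + 3)))

noncomputable def pM (n k : ℕ) : ℝ :=
  ((n : ℝ) + 1) * ((n : ℝ) + 2) * ((n : ℝ) + 3) /
      (((n : ℝ) - 1) * ((n : ℝ) - 2) * ((n : ℝ) - 3)) *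
    (12 * ((k : ℝ) - 1) * ((k : ℝ) - 2) /
      (((k : ℝ) + 1) * ((k : ℝ) + 2) * ((k : ℝ) + 3) * ((k : ℝ) + 4)))

noncomputable def pKL (n k : ℕ) : ℝ :=
  ((n : ℝ) + 1) / (((n : ℝ) - 1) * ((n : ℝ) - 2)) *
    (12 / (((k : ℝ) + 1) * ((k : ℝ) + 2))) * (((n : ℝ) + 2) / ((k : ℝ) + 3) - 1)

noncomputable def pLM (n k : ℕ) : ℝ :=
  ((n : ℝ) + 1) * ((n : ℝ) + 2) / (((n : ℝ) - 1) * ((n : ℝ) - 2) * ((n : ℝ) - 3)) *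
    (72 * ((k : ℝ) - 1) / (((k : ℝ) + 1) * ((k : ℝ) + 2) * ((k : ℝ) + 3))) *
      (((n : ℝ) + 3) / ((k : ℝ) + 4) - 1)

noncomputable def pKLM (n k : ℕ) : ℝ :=
  ((n : ℝ) + 3) / (((n : ℝ) - 1) * ((n : ℝ) - 2) * ((n : ℝ) - 3)) *
      (72 / (((k : ℝ) + 1) * ((k : ℝ) + 2))) *
      (((n : ℝ) + 1) * ((n : ℝ) + 2) / (((k : ℝ) + 3) * ((k : ℝ) + 4)) - 1) -
    ((n : ℝ) + 2) / (((n : ℝ) - 1) * ((n : ℝ) - 2) * ((n : ℝ) - 3)) *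
      (144 / (((k : ℝ) + 1) * ((k : ℝ) + 2))) * (((n : ℝ) + 1) / ((k : ℝ) + 3) - 1)


lemma H_succ (n : ℕ) : H (n + 1) = H n + 1 / ((n : ℝ) + 1) := by
  unfold H
  rw [Finset.sum_Icc_succ_top (by omega : 1 ≤ n + 1)]
  push_cast
  ring

lemma aux_sum (n : ℕ) (hn : 3 ≤ n) :
    ∑ k ∈ Finset.Icc 2 (n - 1),
        (6 * ((k : ℝ) - 1) / (((k : ℝ) + 1) * ((k : ℝ) + 2) * ((k : ℝ) + 3))) * H k =
      (3 * (n : ℝ) * ((n : ℝ) + 1) - 6 * (n : ℝ) * H n) / (((n : ℝ) + 1) * ((n : ℝ) + 2)) := by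
  induction n, hn using Nat.le_induction with
  | base =>
    norm_num [show (3:ℕ) - 1 = 2 from rfl, Finset.Icc_self, H,
      show Finset.Icc 1 2 = {1, 2} from rfl, show Finset.Icc 1 3 = {1, 2, 3} from rfl]
  | succ n hn ih =>
    have h1 : n + 1 - 1 = (n - 1) + 1 := by omega
    rw [h1, Finset.sum_Icc_succ_top (by omega : 2 ≤ n - 1 + 1), ih]
    have h2 : ((n - 1 : ℕ) + 1 : ℕ) = n := by omega
    rw [h2]
    have hc : ((n : ℝ)) ≥ 3 := by exact_mod_cast hn
    rw [H_succ]
    have e1 : (n : ℝ) + 1 ≠ 0 := by linarith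
    have e2 : (n : ℝ) + 2 ≠ 0 := by linarith
    have e3 : (n : ℝ) + 3 ≠ 0 := by linarith
    push_cast
    field_simp
    ring

theorem expectation_H_L (n : ℕ) (hn : 3 ≤ n) :
    ∑ k ∈ Finset.Icc 2 (n - 1), pL n k * H k =
      (3 * (n : ℝ) * ((n : ℝ) + 1) - 6 * (n : ℝ) * H n) / (((n : ℝ) - 1) * ((n : ℝ) - 2)) := by
  have key := aux_sum n hn
  have hc : ((n : ℝ)) ≥ 3 := by exact_mod_cast hn
  have e1 : (n : ℝ) + 1 ≠ 0 := by linarith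
  have e2 : (n : ℝ) + 2 ≠ 0 := by linarith
  have e3 : (n : ℝ) - 1 ≠ 0 := by linarith
  have e4 : (n : ℝ) - 2 ≠ 0 := by linarith
  have hsum : ∑ k ∈ Finset.Icc 2 (n - 1), pL n k * H k =
      ((n : ℝ) + 1) * ((n : ℝ) + 2) / (((n : ℝ) - 1) * ((n : ℝ) - 2)) *
        ∑ k ∈ Finset.Icc 2 (n - 1),
          (6 * ((k : ℝ) - 1) / (((k : ℝ) + 1) * ((k : ℝ) + 2) * ((k : ℝ) + 3))) * H k := by
    rw [Finset.mul_sum]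
    refine Finset.sum_congr rfl fun k _ => ?_
    unfold pL
    ring
  rw [hsum, key]
  field_simp
end

section
/- For every integer n ≥ 3, Σ_{k=1}^{n−2} p_{KL}(n,k)·H_k = 6H_n/((n−1)(n−2)) + 3n(n−5)/(2(n−1)(n−2)). In particular this expression tends to 3/2 with error O(n^{-1} log n) as n → ∞. -/
open Finset

lemma Hsucc (m : ℕ) : H (m + 1) = H m + 1 / ((m : ℝ) + 1) := by
  unfold H
  rw [Finset.sum_Icc_succ_top (by omega)]
  push_cast; ring

lemma H_one : H 1 = 1 := by simp [H]

lemma T1 (m : ℕ) :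
    ∑ k ∈ Finset.Icc 1 m, H k / (((k : ℝ) + 1) * ((k : ℝ) + 2)) =
      1 - (H (m + 1) + 1) / ((m : ℝ) + 2) := by
  induction m with
  | zero => norm_num [H_one]
  | succ m ih =>
      rw [Finset.sum_Icc_succ_top (by omega), ih, Hsucc (m + 1)]
      have h1 : (m : ℝ) + 1 ≠ 0 := by positivity
      have h2 : (m : ℝ) + 2 ≠ 0 := by positivity
      have h3 : (m : ℝ) + 3 ≠ 0 := by positivity
      push_cast
      field_simp
      ring

lemma T2 (m : ℕ) :
    ∑ k ∈ Finset.Icc 1 m, H k / (((k : ℝ) + 1) * ((k : ℝ) + 2) * ((k : ℝ) + 3)) =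
      1 / 8 - (2 * H (m + 1) + 1) / (4 * ((m : ℝ) + 2) * ((m : ℝ) + 3)) := by
  induction m with
  | zero => norm_num [H_one]
  | succ m ih =>
      rw [Finset.sum_Icc_succ_top (by omega), ih, Hsucc (m + 1)]
      have h1 : (m : ℝ) + 1 ≠ 0 := by positivity
      have h2 : (m : ℝ) + 2 ≠ 0 := by positivity
      have h3 : (m : ℝ) + 3 ≠ 0 := by positivity
      have h4 : (m : ℝ) + 4 ≠ 0 := by positivity
      push_cast
      field_simp
      ring

lemma H_eq_harmonic (n : ℕ) : H n = (harmonic n : ℝ) := by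
  rw [H, harmonic_eq_sum_Icc]
  push_cast
  simp [one_div]

lemma H_nonneg (n : ℕ) : 0 ≤ H n := by
  unfold H
  exact Finset.sum_nonneg fun i _ => by positivity

lemma keyalg (x y h : ℝ) (hy1 : y+1 ≠ 0) (hy2 : y+2 ≠ 0) (hy3 : y+3 ≠ 0)
    (hx1 : x+1 ≠ 0) (hx2 : x+2 ≠ 0) :
    (x+4)/((x+2)*(x+1)) * (12/((y+1)*(y+2))) * ((x+5)/(y+3)-1) * h =
    12*(x+4)*(x+5)/((x+2)*(x+1)) * (h/((y+1)*(y+2)*(y+3)))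
      - 12*(x+4)/((x+2)*(x+1)) * (h/((y+1)*(y+2))) := by
  field_simp

lemma finalg (x h : ℝ) (hx1 : x+1 ≠ 0) (hx2 : x+2 ≠ 0) (hx3 : x+3 ≠ 0) (hx4 : x+4 ≠ 0) :
    12*(x+4)*(x+5)/((x+2)*(x+1)) * (1/8 - (2*h+1)/(4*(x+3)*(x+4)))
    - 12*(x+4)/((x+2)*(x+1)) * (1 - (h+1)/(x+3))
    = 6*(h + 1/(x+3)) / ((x+2)*(x+1)) + 3*(x+3)*((x+3)-5)/(2*(x+2)*(x+1)) := by
  field_simp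
  ring

theorem expectation_H_KL :
    (∀ n : ℕ, 3 ≤ n →
      ∑ k ∈ Finset.Icc 1 (n - 2), pKL n k * H k =
        6 * H n / (((n : ℝ) - 1) * ((n : ℝ) - 2)) +
          3 * (n : ℝ) * ((n : ℝ) - 5) / (2 * ((n : ℝ) - 1) * ((n : ℝ) - 2))) ∧
    ∃ C : ℝ, 0 < C ∧ ∃ N : ℕ, ∀ n : ℕ, N ≤ n →
      |∑ k ∈ Finset.Icc 1 (n - 2), pKL n k * H k - 3 / 2| ≤ C * Real.log n / n := by
  have part1 : ∀ n : ℕ, 3 ≤ n →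
      ∑ k ∈ Finset.Icc 1 (n - 2), pKL n k * H k =
        6 * H n / (((n : ℝ) - 1) * ((n : ℝ) - 2)) +
          3 * (n : ℝ) * ((n : ℝ) - 5) / (2 * ((n : ℝ) - 1) * ((n : ℝ) - 2)) := by
    intro n hn
    obtain ⟨m, rfl⟩ : ∃ m, n = m + 3 := ⟨n - 3, by omega⟩
    have hsub : m + 3 - 2 = m + 1 := by omega
    rw [hsub]
    have hm1 : (m : ℝ) + 1 ≠ 0 := by positivity
    have hm2 : (m : ℝ) + 2 ≠ 0 := by positivity
    have hm3 : (m : ℝ) + 3 ≠ 0 := by positivity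
    have hm4 : (m : ℝ) + 4 ≠ 0 := by positivity
    have key : ∀ k ∈ Finset.Icc 1 (m + 1), pKL (m + 3) k * H k =
        (12 * ((m : ℝ) + 4) * ((m : ℝ) + 5) / (((m : ℝ) + 2) * ((m : ℝ) + 1))) *
          (H k / (((k : ℝ) + 1) * ((k : ℝ) + 2) * ((k : ℝ) + 3)))
        - (12 * ((m : ℝ) + 4) / (((m : ℝ) + 2) * ((m : ℝ) + 1))) *
          (H k / (((k : ℝ) + 1) * ((k : ℝ) + 2))) := by
      intro k _
      have h1 : (k : ℝ) + 1 ≠ 0 := by positivity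
      have h2 : (k : ℝ) + 2 ≠ 0 := by positivity
      have h3 : (k : ℝ) + 3 ≠ 0 := by positivity
      unfold pKL
      push_cast
      linear_combination keyalg (m : ℝ) (k : ℝ) (H k) h1 h2 h3 hm1 hm2
    rw [Finset.sum_congr rfl key, Finset.sum_sub_distrib, ← Finset.mul_sum, ← Finset.mul_sum,
      T1, T2]
    have hH : H (m + 3) = H (m + 2) + 1 / ((m : ℝ) + 3) := by
      rw [show m + 3 = m + 2 + 1 from rfl, Hsucc]
      push_cast
      ring
    rw [show m + 1 + 1 = m + 2 from rfl, hH]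
    push_cast
    linear_combination finalg (m : ℝ) (H (m + 2)) hm1 hm2 hm3 hm4
  refine ⟨part1, 72, by norm_num, 4, fun n hn => ?_⟩
  have hn4 : (4 : ℝ) ≤ n := by exact_mod_cast hn
  have hn0 : (0 : ℝ) < n := by linarith
  have hL1 : 1 ≤ Real.log n := by
    rw [Real.le_log_iff_exp_le hn0]
    calc Real.exp 1 ≤ 2.7182818286 := le_of_lt Real.exp_one_lt_d9
      _ ≤ (n : ℝ) := by linarith
  have hHle : H n ≤ 1 + Real.log n := by
    rw [H_eq_harmonic]; exact harmonic_le_one_add_log n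
  have hH0 : 0 ≤ H n := H_nonneg n
  have hd1 : (0 : ℝ) < (n : ℝ) - 1 := by linarith
  have hd2 : (0 : ℝ) < (n : ℝ) - 2 := by linarith
  rw [part1 n (by omega)]
  have heq : 6 * H n / (((n : ℝ) - 1) * ((n : ℝ) - 2)) +
      3 * (n : ℝ) * ((n : ℝ) - 5) / (2 * ((n : ℝ) - 1) * ((n : ℝ) - 2)) - 3 / 2 =
      (6 * H n - 3 * ((n : ℝ) + 1)) / (((n : ℝ) - 1) * ((n : ℝ) - 2)) := by
    field_simp
    ring
  rw [heq, abs_div, abs_of_pos (mul_pos hd1 hd2)]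
  rw [div_le_div_iff₀ (mul_pos hd1 hd2) hn0]
  have habs : |6 * H n - 3 * ((n : ℝ) + 1)| ≤ 6 * (1 + Real.log n) + 3 * ((n : ℝ) + 1) := by
    rw [abs_le]
    constructor <;> nlinarith
  have hmul : |6 * H n - 3 * ((n : ℝ) + 1)| * n ≤
      (6 * (1 + Real.log n) + 3 * ((n : ℝ) + 1)) * n :=
    mul_le_mul_of_nonneg_right habs (le_of_lt hn0)
  refine hmul.trans ?_
  nlinarith [mul_nonneg (sub_nonneg.2 hL1) (mul_nonneg hn0.le hn0.le),
    mul_nonneg (sub_nonneg.2 hL1) hn0.le,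
    mul_nonneg (by linarith : (0:ℝ) ≤ Real.log n) (sq_nonneg ((n:ℝ) - 4)),
    sq_nonneg ((n:ℝ) - 4)]
end
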